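/- Let the additive group ℝⁿ act by isometries on a metric space X, and assume the action is continuous in the group variable, i.e. for every x ∈ X the map a ↦ a·x from ℝⁿ to X is continuous. Then for every λ ∈ ℝ and every a ∈ ℝⁿ the stable translation lengths satisfy |λ·a| = |λ|·|a|. -/

import Mathlib

/-!
The sequence `m ↦ d((m • g) +ᵥ x, x)` is subadditive because the action is isometric, so by
Fekete's lemma `d((m • g) +ᵥ x, x) / m` converges; call the limit `τ g`. Comparing subsequences
gives `τ (k • g) = k * τ g`, and `τ (-g) = τ g`, hence `τ (q • v) = |q| * τ v` for rational `q`.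
Since `|τ g - τ h| ≤ d(g +ᵥ x, h +ᵥ x)`, continuity of the orbit map makes `τ` continuous, and
density of `ℚ` in `ℝ` extends the identity to all real scalars.
-/

open Filter Topology

noncomputable section

variable {X : Type*} [PseudoMetricSpace X]

def stableTranslationLength {G : Type*} [AddMonoid G] [AddAction G X] (x : X) (g : G) : ℝ :=
  limUnder atTop fun m : ℕ => dist ((m • g) +ᵥ x) x / m

section AddMonoid

variable {G : Type*} [AddMonoid G] [AddAction G X]
  (hiso : ∀ g : G, Isometry (fun x : X => g +ᵥ x))
include hiso

theorem subadditive_dist_nsmul_vadd (x : X) (g : G) :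
    Subadditive fun m : ℕ => dist ((m • g) +ᵥ x) x := by
  intro m k
  calc dist (((m + k) • g) +ᵥ x) x
      ≤ dist (((m + k) • g) +ᵥ x) ((k • g) +ᵥ x) + dist ((k • g) +ᵥ x) x := dist_triangle _ _ _
    _ = dist ((m • g) +ᵥ x) x + dist ((k • g) +ᵥ x) x := by
      rw [add_comm m, add_nsmul, ← vadd_vadd, (hiso _).dist_eq]

theorem tendsto_stableTranslationLength (x : X) (g : G) :
    Tendsto (fun m : ℕ => dist ((m • g) +ᵥ x) x / m) atTop
      (𝓝 (stableTranslationLength x g)) :=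
  tendsto_nhds_limUnder ⟨_, (subadditive_dist_nsmul_vadd hiso x g).tendsto_lim
    ⟨0, by rintro _ ⟨m, rfl⟩; positivity⟩⟩

theorem stableTranslationLength_eq_of_tendsto {x : X} {g : G} {ℓ : ℝ}
    (h : Tendsto (fun m : ℕ => dist ((m • g) +ᵥ x) x / m) atTop (𝓝 ℓ)) :
    stableTranslationLength x g = ℓ :=
  tendsto_nhds_unique (tendsto_stableTranslationLength hiso x g) h

omit hiso in
theorem stableTranslationLength_zero (x : X) : stableTranslationLength x (0 : G) = 0 := by
  simpa [stableTranslationLength] using tendsto_const_nhds.limUnder_eq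

theorem stableTranslationLength_nsmul (x : X) (g : G) (k : ℕ) :
    stableTranslationLength x (k • g) = k * stableTranslationLength x g := by
  rcases Nat.eq_zero_or_pos k with rfl | hk
  · simp [stableTranslationLength_zero]
  apply stableTranslationLength_eq_of_tendsto hiso
  have hmk : Tendsto (fun m : ℕ => m * k) atTop atTop := tendsto_id.atTop_mul_const' hk
  refine (((tendsto_stableTranslationLength hiso x g).comp hmk).const_mul (k : ℝ)).congr' ?_
  filter_upwards [eventually_ne_atTop 0] with m hm
  simp only [Function.comp_apply, Nat.cast_mul, ← mul_nsmul']
  field_simp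

end AddMonoid

theorem stableTranslationLength_neg {G : Type*} [AddGroup G] [AddAction G X]
    (hiso : ∀ g : G, Isometry (fun x : X => g +ᵥ x)) (x : X) (g : G) :
    stableTranslationLength x (-g) = stableTranslationLength x g := by
  refine stableTranslationLength_eq_of_tendsto hiso
    ((tendsto_stableTranslationLength hiso x g).congr fun m => ?_)
  rw [neg_nsmul, ← (hiso (m • g)).dist_eq (-(m • g) +ᵥ x) x, vadd_neg_vadd, dist_comm]

theorem stableTranslationLength_zsmul {G : Type*} [AddGroup G] [AddAction G X]
    (hiso : ∀ g : G, Isometry (fun x : X => g +ᵥ x)) (x : X) (g : G) (k : ℤ) :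
    stableTranslationLength x (k • g) = |(k : ℝ)| * stableTranslationLength x g := by
  obtain ⟨k, rfl | rfl⟩ := Int.eq_nat_or_neg k
  · rw [natCast_zsmul, stableTranslationLength_nsmul hiso, Int.cast_natCast, Nat.abs_cast]
  · rw [neg_zsmul, natCast_zsmul, stableTranslationLength_neg hiso,
      stableTranslationLength_nsmul hiso, Int.cast_neg, Int.cast_natCast, abs_neg, Nat.abs_cast]

section AddCommMonoid

variable {G : Type*} [AddCommMonoid G] [AddAction G X]
  (hiso : ∀ g : G, Isometry (fun x : X => g +ᵥ x))
include hiso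

theorem dist_nsmul_vadd_le (x : X) (g h : G) (m : ℕ) :
    dist ((m • g) +ᵥ x) ((m • h) +ᵥ x) ≤ m * dist (g +ᵥ x) (h +ᵥ x) := by
  have vadd_comm' : ∀ (a b : G) (y : X), a +ᵥ b +ᵥ y = b +ᵥ a +ᵥ y := fun a b y => by
    rw [vadd_vadd, vadd_vadd, add_comm]
  induction m with
  | zero => simp
  | succ m ih =>
    calc dist (((m + 1) • g) +ᵥ x) (((m + 1) • h) +ᵥ x)
        = dist (g +ᵥ (m • g) +ᵥ x) (h +ᵥ (m • h) +ᵥ x) := by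
          rw [succ_nsmul', succ_nsmul', vadd_vadd, vadd_vadd]
      _ ≤ dist (g +ᵥ (m • g) +ᵥ x) (g +ᵥ (m • h) +ᵥ x)
          + dist (g +ᵥ (m • h) +ᵥ x) (h +ᵥ (m • h) +ᵥ x) := dist_triangle _ _ _
      _ = dist ((m • g) +ᵥ x) ((m • h) +ᵥ x) + dist (g +ᵥ x) (h +ᵥ x) := by
          rw [(hiso g).dist_eq, vadd_comm' g, vadd_comm' h, (hiso _).dist_eq]
      _ ≤ (m + 1 : ℕ) * dist (g +ᵥ x) (h +ᵥ x) := by push_cast; linarith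

theorem stableTranslationLength_le_add_dist (x : X) (g h : G) :
    stableTranslationLength x g ≤ stableTranslationLength x h + dist (g +ᵥ x) (h +ᵥ x) := by
  refine le_of_tendsto_of_tendsto (tendsto_stableTranslationLength hiso x g)
    ((tendsto_stableTranslationLength hiso x h).add_const _) ?_
  filter_upwards [eventually_gt_atTop 0] with m hm
  have hm' : (0 : ℝ) < m := by exact_mod_cast hm
  rw [div_add' _ _ _ hm'.ne', div_le_div_iff_of_pos_right hm', add_comm _ (_ * _)]
  calc dist ((m • g) +ᵥ x) x
      ≤ dist ((m • g) +ᵥ x) ((m • h) +ᵥ x) + dist ((m • h) +ᵥ x) x := dist_triangle _ _ _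
    _ ≤ _ := by gcongr; exact mul_comm (m : ℝ) _ ▸ dist_nsmul_vadd_le hiso x g h m

theorem abs_sub_stableTranslationLength_le (x : X) (g h : G) :
    |stableTranslationLength x g - stableTranslationLength x h| ≤ dist (g +ᵥ x) (h +ᵥ x) := by
  have hgh := stableTranslationLength_le_add_dist hiso x g h
  have hhg := stableTranslationLength_le_add_dist hiso x h g
  rw [dist_comm] at hhg
  rw [abs_sub_le_iff]
  constructor <;> linarith

theorem continuous_stableTranslationLength [TopologicalSpace G] (x : X)
    (hcont : Continuous fun g : G => g +ᵥ x) :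
    Continuous (stableTranslationLength x : G → ℝ) := by
  refine continuous_iff_continuousAt.2 fun h => tendsto_iff_dist_tendsto_zero.2 ?_
  refine squeeze_zero (fun _ => dist_nonneg)
    (fun g => abs_sub_stableTranslationLength_le hiso x g h) ?_
  simpa using ((hcont.dist continuous_const).tendsto h :
    Tendsto (fun g : G => dist (g +ᵥ x) (h +ᵥ x)) _ _)

end AddCommMonoid

section Module

variable {V : Type*} [AddCommGroup V] [Module ℝ V] [AddAction V X]
  (hiso : ∀ v : V, Isometry (fun x : X => v +ᵥ x))
include hiso

theorem stableTranslationLength_ratCast_smul (x : X) (v : V) (q : ℚ) :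
    stableTranslationLength x ((q : ℝ) • v) = |(q : ℝ)| * stableTranslationLength x v := by
  have hden : (q.den : ℝ) ≠ 0 := by positivity
  have hq : (q.den : ℝ) * q = q.num := by exact_mod_cast q.den_mul_eq_num
  have key : q.den • ((q : ℝ) • v) = q.num • v := by
    rw [← Nat.cast_smul_eq_nsmul ℝ, smul_smul, hq, Int.cast_smul_eq_zsmul]
  have hτ := congrArg (stableTranslationLength x) key
  rw [stableTranslationLength_nsmul hiso, stableTranslationLength_zsmul hiso, ← hq, abs_mul,
    Nat.abs_cast, mul_assoc] at hτ
  exact mul_left_cancel₀ hden hτ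

theorem stableTranslationLength_smul [TopologicalSpace V] [ContinuousSMul ℝ V] (x : X)
    (hcont : Continuous fun v : V => v +ᵥ x) (t : ℝ) (v : V) :
    stableTranslationLength x (t • v) = |t| * stableTranslationLength x v := by
  have hτ := continuous_stableTranslationLength hiso x hcont
  refine congrFun (Rat.denseRange_cast.equalizer (hτ.comp (continuous_id.smul continuous_const))
    (continuous_abs.mul continuous_const) (funext fun q => ?_)) t
  exact stableTranslationLength_ratCast_smul hiso x v q

end Module

end

/-- If the additive group `ℝⁿ` acts by isometries on a metric space `X`,
continuously in the group variable, then the stable translation length is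
absolutely homogeneous: `|λ • a| = |λ| * |a|`. -/
theorem stable_translation_length_smul
    {n : ℕ} {X : Type*} [MetricSpace X]
    [AddAction (EuclideanSpace ℝ (Fin n)) X]
    (hiso : ∀ a : EuclideanSpace ℝ (Fin n), Isometry (fun x : X => a +ᵥ x))
    (hcont : ∀ x : X, Continuous (fun a : EuclideanSpace ℝ (Fin n) => a +ᵥ x))
    (lam : ℝ) (a : EuclideanSpace ℝ (Fin n)) (x : X) (ℓ ℓ' : ℝ)
    (hℓ : Tendsto (fun m : ℕ => dist ((m • a) +ᵥ x) x / m) atTop (𝓝 ℓ))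
    (hℓ' : Tendsto (fun m : ℕ => dist ((m • (lam • a)) +ᵥ x) x / m) atTop (𝓝 ℓ')) :
    ℓ' = |lam| * ℓ := by
  rw [← stableTranslationLength_eq_of_tendsto hiso hℓ,
    ← stableTranslationLength_eq_of_tendsto hiso hℓ']
  exact stableTranslationLength_smul hiso x (hcont x) lam a
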